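/- arXiv:2104.07487 — 2 statements merged into one kernel-verified Lean document; each statement's English description precedes it below -/
import Mathlib

section
/- Let K_1 ⊇ K_2 ⊇ ⋯ be nested compact convex subsets of the unit ball with α_i := D_p(K_i, K_{i+1}) nonincreasing in i and α_i ≤ 2ε for all i, and let 0 < η < (1−ε)/(2ε). Suppose each K_i contains the ball B(0, 1−ε). Define s̄(K_i) = (−1)^{i+1}·η·α_i·e_1. Then s̄ is a partial selector (s̄(K_i) ∈ K_i for all i) and is 2η-Lipschitz with respect to D_p: for all i, j, ‖s̄(K_i) − s̄(K_j)‖ ≤ 2η·D_p(K_i, K_j). Moreover Σ_i ‖s̄(K_i) − s̄(K_{i+1})‖ ≥ η·Σ_i α_i. -/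
/-!
The point `s̄(Kᵢ)` has norm `η αᵢ ≤ 2ηε < 1 - ε`, so it lies in the ball `B(0, 1 - ε) ⊆ Kᵢ`.
For `i < j` the nesting `Kⱼ ⊆ Kᵢ₊₁ ⊆ Kᵢ` orders the support functions, whence
`αᵢ ≤ D_p(Kᵢ, Kⱼ)`, while `αⱼ ≤ αᵢ` gives `‖s̄(Kᵢ) - s̄(Kⱼ)‖ ≤ η(αᵢ + αⱼ) ≤ 2ηαᵢ`.
Consecutive points lie on opposite sides of `0`, so `‖s̄(Kᵢ) - s̄(Kᵢ₊₁)‖ = η(αᵢ + αᵢ₊₁) ≥ ηαᵢ`.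
-/

open MeasureTheory Real Set
open scoped RealInnerProductSpace

noncomputable section

/-- The normalized uniform (surface) measure on the unit sphere in `ℝ^d`. -/
def sphereMeasure (d : ℕ) : Measure (Metric.sphere (0 : EuclideanSpace ℝ (Fin d)) 1) :=
  ((volume : Measure (EuclideanSpace ℝ (Fin d))).toSphere Set.univ)⁻¹ •
    (volume : Measure (EuclideanSpace ℝ (Fin d))).toSphere

/-- The support function of a set `K ⊆ ℝ^d`. -/
def suppFn {d : ℕ} (K : Set (EuclideanSpace ℝ (Fin d))) (y : EuclideanSpace ℝ (Fin d)) : ℝ :=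
  sSup ((fun x => ⟪x, y⟫) '' K)

/-- The `L_p` analog of the Hausdorff distance: the `L_p`-distance of support functions
with respect to the normalized uniform measure on the sphere. -/
def Dp {d : ℕ} (p : ℝ) (K K' : Set (EuclideanSpace ℝ (Fin d))) : ℝ :=
  (∫ y : Metric.sphere (0 : EuclideanSpace ℝ (Fin d)) 1,
      |suppFn K (y : EuclideanSpace ℝ (Fin d)) - suppFn K' (y : EuclideanSpace ℝ (Fin d))| ^ p
    ∂ sphereMeasure d) ^ (1 / p)

/-- The open spherical cap of angular radius `θ` around `v`, as a subset of `ℝ^d`. -/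
def cap {d : ℕ} (v : EuclideanSpace ℝ (Fin d)) (θ : ℝ) : Set (EuclideanSpace ℝ (Fin d)) :=
  {x | ‖x‖ = 1 ∧ Real.arccos ⟪x, v⟫ < θ}

/-- The open spherical cap, as a subset of the unit sphere (for measuring). -/
def capS {d : ℕ} (v : EuclideanSpace ℝ (Fin d)) (θ : ℝ) :
    Set (Metric.sphere (0 : EuclideanSpace ℝ (Fin d)) 1) :=
  {x | Real.arccos ⟪(x : EuclideanSpace ℝ (Fin d)), v⟫ < θ}

/-- The Steiner point of a set `K ⊆ ℝ^d`. -/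
def steiner {d : ℕ} (K : Set (EuclideanSpace ℝ (Fin d))) : EuclideanSpace ℝ (Fin d) :=
  (d : ℝ) • ∫ y : Metric.sphere (0 : EuclideanSpace ℝ (Fin d)) 1,
      suppFn K (y : EuclideanSpace ℝ (Fin d)) • (y : EuclideanSpace ℝ (Fin d)) ∂ sphereMeasure d

instance sphereMeasure.instIsFiniteMeasure (d : ℕ) : IsFiniteMeasure (sphereMeasure d) := by
  constructor
  rw [sphereMeasure, Measure.smul_apply, smul_eq_mul]
  exact (ENNReal.inv_mul_le_one _).trans_lt ENNReal.one_lt_top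

section SupportFunction

variable {d : ℕ} {K L : Set (EuclideanSpace ℝ (Fin d))}

lemma inner_le_mul_norm_of_mem_closedBall {R : ℝ} (hK : K ⊆ Metric.closedBall 0 R)
    {x : EuclideanSpace ℝ (Fin d)} (hx : x ∈ K) (y : EuclideanSpace ℝ (Fin d)) :
    ⟪x, y⟫ ≤ R * ‖y‖ :=
  (real_inner_le_norm x y).trans
    (mul_le_mul_of_nonneg_right (mem_closedBall_zero_iff.mp (hK hx)) (norm_nonneg y))

lemma bddAbove_inner_image (hK : Bornology.IsBounded K) (y : EuclideanSpace ℝ (Fin d)) :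
    BddAbove ((fun x => ⟪x, y⟫) '' K) := by
  obtain ⟨R, hR⟩ := hK.subset_closedBall 0
  exact ⟨R * ‖y‖, by
    rintro _ ⟨x, hx, rfl⟩
    exact inner_le_mul_norm_of_mem_closedBall hR hx y⟩

lemma inner_le_suppFn (hK : Bornology.IsBounded K) {x : EuclideanSpace ℝ (Fin d)} (hx : x ∈ K)
    (y : EuclideanSpace ℝ (Fin d)) : ⟪x, y⟫ ≤ suppFn K y :=
  le_csSup (bddAbove_inner_image hK y) ⟨x, hx, rfl⟩

lemma suppFn_mono (hK : Bornology.IsBounded K) (hL : L.Nonempty) (hLK : L ⊆ K)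
    (y : EuclideanSpace ℝ (Fin d)) : suppFn L y ≤ suppFn K y :=
  csSup_le_csSup (bddAbove_inner_image hK y) (hL.image _) (image_mono hLK)

lemma lipschitzWith_suppFn {R : NNReal} (hK : K ⊆ Metric.closedBall 0 R) (hne : K.Nonempty) :
    LipschitzWith R (suppFn K) := by
  have hKb : Bornology.IsBounded K := Metric.isBounded_closedBall.subset hK
  refine LipschitzWith.of_le_add_mul R fun y y' => csSup_le (hne.image _) ?_
  rintro _ ⟨x, hx, rfl⟩
  calc ⟪x, y⟫ = ⟪x, y'⟫ + ⟪x, y - y'⟫ := by rw [inner_sub_right]; ring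
    _ ≤ suppFn K y' + R * dist y y' := by
      rw [dist_eq_norm]
      exact add_le_add (inner_le_suppFn hKb hx y') (inner_le_mul_norm_of_mem_closedBall hK hx _)

lemma continuous_suppFn (hK : Bornology.IsBounded K) (hne : K.Nonempty) :
    Continuous (suppFn K) := by
  obtain ⟨R, -, hR⟩ := hK.subset_closedBall_lt 0 0
  exact (lipschitzWith_suppFn (R := R.toNNReal) (hR.trans
    (Metric.closedBall_subset_closedBall (le_coe_toNNReal R))) hne).continuous

end SupportFunction

section LpDistance

variable {d : ℕ}

lemma Dp_nonneg (p : ℝ) (K L : Set (EuclideanSpace ℝ (Fin d))) : 0 ≤ Dp p K L :=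
  rpow_nonneg (integral_nonneg fun _ => rpow_nonneg (abs_nonneg _) _) _

lemma Dp_comm (p : ℝ) (K L : Set (EuclideanSpace ℝ (Fin d))) : Dp p K L = Dp p L K := by
  simp only [Dp, abs_sub_comm]

lemma Dp_le_Dp_of_subset {p : ℝ} (hp : 0 < p) {A B C : Set (EuclideanSpace ℝ (Fin d))}
    (hA : Bornology.IsBounded A) (hC : C.Nonempty) (hBA : B ⊆ A) (hCB : C ⊆ B) :
    Dp p A B ≤ Dp p A C := by
  have hB : Bornology.IsBounded B := hA.subset hBA
  have hint : Integrable (fun y : Metric.sphere (0 : EuclideanSpace ℝ (Fin d)) 1 =>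
      |suppFn A (y : EuclideanSpace ℝ (Fin d)) - suppFn C (y : EuclideanSpace ℝ (Fin d))| ^ p)
      (sphereMeasure d) := by
    refine Continuous.integrable_of_hasCompactSupport ?_ (HasCompactSupport.of_compactSpace _)
    refine Continuous.rpow_const ?_ fun _ => Or.inr hp.le
    exact (((continuous_suppFn hA (hC.mono (hCB.trans hBA))).sub
      (continuous_suppFn (hB.subset hCB) hC)).abs).comp continuous_subtype_val
  refine rpow_le_rpow (integral_nonneg fun _ => rpow_nonneg (abs_nonneg _) _)
    (integral_mono_of_nonneg (.of_forall fun _ => rpow_nonneg (abs_nonneg _) _) hint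
      (.of_forall fun y => rpow_le_rpow (abs_nonneg _) ?_ hp.le)) (by positivity)
  have hCB' := suppFn_mono hB hC hCB y
  have hBA' := suppFn_mono hA (hC.mono hCB) hBA y
  rw [abs_of_nonneg (by linarith), abs_of_nonneg (by linarith)]
  linarith

end LpDistance

section Alternating

variable {a : ℕ → ℝ}

lemma abs_neg_one_pow_mul_sub_le (ha : Antitone a) {i j : ℕ} (hij : i ≤ j) (hj : 0 ≤ a j) :
    |(-1) ^ i * a i - (-1) ^ j * a j| ≤ 2 * a i := by
  have hji := ha hij
  calc |(-1) ^ i * a i - (-1) ^ j * a j| ≤ |(-1) ^ i * a i| + |(-1) ^ j * a j| := abs_sub _ _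
    _ = a i + a j := by
      simp only [abs_mul, abs_pow, abs_neg, abs_one, one_pow, one_mul, abs_of_nonneg hj,
        abs_of_nonneg (hj.trans hji)]
    _ ≤ 2 * a i := by linarith

lemma abs_neg_one_pow_mul_sub_succ (a : ℕ → ℝ) (i : ℕ) :
    |(-1) ^ i * a i - (-1) ^ (i + 1) * a (i + 1)| = |a i + a (i + 1)| := by
  rw [pow_succ, show (-1) ^ i * a i - (-1) ^ i * -1 * a (i + 1) = (-1) ^ i * (a i + a (i + 1))
    by ring, abs_mul, abs_pow, abs_neg, abs_one, one_pow, one_mul]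

end Alternating

/-- Indexing starts at `0`, so the paper's sign `(-1)^(i+1)` becomes `(-1)^i`. -/
theorem partial_selector_properties_general (p : ℝ) (hp : 1 ≤ p) (d : ℕ) (hd : 0 < d)
    (K : ℕ → Set (EuclideanSpace ℝ (Fin d)))
    (hnest : ∀ i, K (i + 1) ⊆ K i)
    (hsub : ∀ i, K i ⊆ Metric.closedBall 0 1)
    (ε η : ℝ) (hε : 0 < ε) (hη : 0 < η) (hηε : η < (1 - ε) / (2 * ε))
    (hball : ∀ i, Metric.closedBall (0 : EuclideanSpace ℝ (Fin d)) (1 - ε) ⊆ K i)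
    (hα : ∀ i, Dp p (K i) (K (i + 1)) ≤ 2 * ε)
    (hαmono : Antitone (fun i => Dp p (K i) (K (i + 1))))
    (s : ℕ → EuclideanSpace ℝ (Fin d))
    (hs : ∀ i, s i = ((-1 : ℝ) ^ i * (η * Dp p (K i) (K (i + 1)))) •
      EuclideanSpace.single (⟨0, hd⟩ : Fin d) (1 : ℝ)) :
    (∀ i, s i ∈ K i) ∧
      (∀ i j, ‖s i - s j‖ ≤ 2 * η * Dp p (K i) (K j)) ∧
      (∀ n, η * ∑ i ∈ Finset.range n, Dp p (K i) (K (i + 1)) ≤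
        ∑ i ∈ Finset.range n, ‖s i - s (i + 1)‖) := by
  have hηε' : η * (2 * ε) < 1 - ε := (lt_div_iff₀ (by positivity)).mp hηε
  have h0K (i : ℕ) : 0 ∈ K i := hball i (Metric.mem_closedBall_self (by nlinarith))
  set a : ℕ → ℝ := fun i => η * Dp p (K i) (K (i + 1))
  have ha0 (i : ℕ) : 0 ≤ a i := mul_nonneg hη.le (Dp_nonneg p _ _)
  have ha_anti : Antitone a := fun i j hij => mul_le_mul_of_nonneg_left (hαmono hij) hη.le
  have hnorm (i : ℕ) : ‖s i‖ = a i := by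
    rw [hs, norm_smul, PiLp.norm_single, norm_one, mul_one, norm_mul, norm_pow, norm_neg,
      norm_one, one_pow, one_mul, Real.norm_of_nonneg (ha0 i)]
  have hdist (i j : ℕ) : ‖s i - s j‖ = |(-1) ^ i * a i - (-1) ^ j * a j| := by
    rw [hs, hs, ← sub_smul, norm_smul, PiLp.norm_single, norm_one, mul_one, Real.norm_eq_abs]
  have hlip (i j : ℕ) (hij : i < j) : ‖s i - s j‖ ≤ 2 * η * Dp p (K i) (K j) := by
    have hK_anti : Antitone K := antitone_nat_of_succ_le hnest
    have hαij : Dp p (K i) (K (i + 1)) ≤ Dp p (K i) (K j) :=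
      Dp_le_Dp_of_subset (by linarith) (Metric.isBounded_closedBall.subset (hsub i)) ⟨0, h0K j⟩
        (hnest i) (hK_anti hij)
    calc ‖s i - s j‖ ≤ 2 * a i := hdist i j ▸ abs_neg_one_pow_mul_sub_le ha_anti hij.le (ha0 j)
      _ ≤ 2 * η * Dp p (K i) (K j) := by nlinarith
  refine ⟨fun i => hball i ?_, fun i j => ?_, fun n => ?_⟩
  · rw [mem_closedBall_zero_iff, hnorm]
    nlinarith [hα i]
  · rcases lt_trichotomy i j with h | rfl | h
    · exact hlip i j h
    · simpa using mul_nonneg (by positivity : (0 : ℝ) ≤ 2 * η) (Dp_nonneg p (K i) (K i))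
    · rw [norm_sub_rev, Dp_comm]
      exact hlip j i h
  · rw [Finset.mul_sum]
    gcongr with i
    rw [hdist, abs_neg_one_pow_mul_sub_succ, abs_of_nonneg (add_nonneg (ha0 i) (ha0 (i + 1)))]
    linarith [ha0 (i + 1)]

/-- The alternating partial selector `s̄(Kᵢ) = (-1)^(i+1)·η·αᵢ·e₁` on a nested sequence of
compact convex sets (indexed here from `0`, so the sign is `(-1)^i`) with
`αᵢ = D_p(Kᵢ,Kᵢ₊₁)` nonincreasing and `αᵢ ≤ 2ε`, each `Kᵢ` containing `B(0,1-ε)`, and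
`0 < η < (1-ε)/(2ε)`, is a partial selector, is `2η`-Lipschitz with respect to `D_p`,
and its total movement is at least `η·Σᵢ αᵢ`. -/
theorem partial_selector_properties (p : ℝ) (hp : 1 ≤ p) (d : ℕ) (hd : 0 < d)
    (K : ℕ → Set (EuclideanSpace ℝ (Fin d)))
    (hK : ∀ i, IsCompact (K i) ∧ Convex ℝ (K i))
    (hnest : ∀ i, K (i + 1) ⊆ K i)
    (hsub : ∀ i, K i ⊆ Metric.closedBall 0 1)
    (ε η : ℝ) (hε : 0 < ε) (hη : 0 < η) (hηε : η < (1 - ε) / (2 * ε))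
    (hball : ∀ i, Metric.closedBall (0 : EuclideanSpace ℝ (Fin d)) (1 - ε) ⊆ K i)
    (hα : ∀ i, Dp p (K i) (K (i + 1)) ≤ 2 * ε)
    (hαmono : Antitone (fun i => Dp p (K i) (K (i + 1))))
    (s : ℕ → EuclideanSpace ℝ (Fin d))
    (hs : ∀ i, s i = ((-1 : ℝ) ^ i * (η * Dp p (K i) (K (i + 1)))) •
      EuclideanSpace.single (⟨0, hd⟩ : Fin d) (1 : ℝ)) :
    (∀ i, s i ∈ K i) ∧
      (∀ i j, ‖s i - s j‖ ≤ 2 * η * Dp p (K i) (K j)) ∧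
      (∀ n, η * ∑ i ∈ Finset.range n, Dp p (K i) (K (i + 1)) ≤
        ∑ i ∈ Finset.range n, ‖s i - s (i + 1)‖) :=
  partial_selector_properties_general p hp d hd K hnest hsub ε η hε hη hηε hball hα hαmono s hs
end
end

section
/- Fix p ∈ [1,∞) and d > 2p + 2. Let ŝ be the partial selector defined only on the unit ball B by ŝ(B) = e_1. Then ŝ cannot be extended to a selector on all nonempty compact convex subsets of ℝ^d that is Lipschitz with respect to D_p. -/
open MeasureTheory Real Set
open scoped RealInnerProductSpace Pointwise ENNReal

noncomputable section

/-! ### Auxiliary lemmas -/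

lemma suppFn_eq_one {d : ℕ} {K : Set (EuclideanSpace ℝ (Fin d))}
    {u : EuclideanSpace ℝ (Fin d)} (hu : ‖u‖ = 1)
    (hK : K ⊆ Metric.closedBall 0 1) (huK : u ∈ K) : suppFn K u = 1 := by
  apply IsGreatest.csSup_eq
  constructor
  · refine ⟨u, huK, ?_⟩
    show ⟪u, u⟫ = 1
    rw [real_inner_self_eq_norm_mul_norm, hu, one_mul]
  · rintro _ ⟨x, hx, rfl⟩
    have hx1 : ‖x‖ ≤ 1 := by simpa [mem_closedBall_zero_iff] using hK hx
    calc ⟪x, u⟫ ≤ ‖x‖ * ‖u‖ := real_inner_le_norm x u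
      _ ≤ 1 := by rw [hu, mul_one]; exact hx1

lemma suppFn_le_one {d : ℕ} {K : Set (EuclideanSpace ℝ (Fin d))}
    {u : EuclideanSpace ℝ (Fin d)} (hu : ‖u‖ = 1)
    (hK : K ⊆ Metric.closedBall 0 1) (hne : K.Nonempty) : suppFn K u ≤ 1 := by
  apply csSup_le (hne.image _)
  rintro _ ⟨x, hx, rfl⟩
  have hx1 : ‖x‖ ≤ 1 := by simpa [mem_closedBall_zero_iff] using hK hx
  calc ⟪x, u⟫ ≤ ‖x‖ * ‖u‖ := real_inner_le_norm x u
    _ ≤ 1 := by rw [hu, mul_one]; exact hx1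

lemma le_suppFn {d : ℕ} {K : Set (EuclideanSpace ℝ (Fin d))}
    {u x : EuclideanSpace ℝ (Fin d)} (hu : ‖u‖ = 1)
    (hK : K ⊆ Metric.closedBall 0 1) (hx : x ∈ K) : ⟪x, u⟫ ≤ suppFn K u := by
  apply le_csSup
  · refine ⟨1, ?_⟩
    rintro _ ⟨z, hz, rfl⟩
    have hz1 : ‖z‖ ≤ 1 := by simpa [mem_closedBall_zero_iff] using hK hz
    calc ⟪z, u⟫ ≤ ‖z‖ * ‖u‖ := real_inner_le_norm z u
      _ ≤ 1 := by rw [hu, mul_one]; exact hz1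
  · exact ⟨x, hx, rfl⟩

instance sphereMeasure_finite (d : ℕ) : IsFiniteMeasure (sphereMeasure d) := by
  constructor
  rw [sphereMeasure, Measure.smul_apply, smul_eq_mul]
  rcases eq_or_ne ((volume : Measure (EuclideanSpace ℝ (Fin d))).toSphere Set.univ) 0 with h | h
  · rw [h]; simp
  · rw [ENNReal.inv_mul_cancel h (measure_ne_top _ _)]
    exact ENNReal.one_lt_top

lemma sphereMeasure_singleton (d : ℕ) (hd : 1 < d)
    (x₀ : Metric.sphere (0 : EuclideanSpace ℝ (Fin d)) 1) :
    sphereMeasure d {x₀} = 0 := by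
  rw [sphereMeasure, Measure.smul_apply, smul_eq_mul]
  suffices h : (volume : Measure (EuclideanSpace ℝ (Fin d))).toSphere {x₀} = 0 by
    rw [h, mul_zero]
  rw [Measure.toSphere_apply' _ (measurableSet_singleton _)]
  have hx0 : (x₀ : EuclideanSpace ℝ (Fin d)) ≠ 0 := by
    intro h
    have : ‖(x₀ : EuclideanSpace ℝ (Fin d))‖ = 1 := mem_sphere_zero_iff_norm.mp x₀.2
    rw [h, norm_zero] at this; norm_num at this
  have hspan : (Submodule.span ℝ {(x₀ : EuclideanSpace ℝ (Fin d))} : Submodule ℝ (EuclideanSpace ℝ (Fin d))) ≠ ⊤ := by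
    intro h
    have h1 := finrank_span_singleton (K := ℝ) hx0
    rw [h, finrank_top] at h1
    rw [finrank_euclideanSpace_fin] at h1
    omega
  refine mul_eq_zero_of_right _
    (measure_mono_null ?_ (Measure.addHaar_submodule volume _ hspan))
  rw [Set.image_singleton]
  rintro z hz
  rw [Set.mem_smul] at hz
  obtain ⟨a, b, ha, hb, rfl⟩ := hz
  rw [Set.mem_singleton_iff] at hb
  subst hb
  exact Submodule.smul_mem _ a (Submodule.mem_span_singleton_self _)

/-- For `p ∈ [1,∞)` and `d > 2p+2`, the partial selector sending the unit ball to `e₁`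
admits no extension to a selector on all nonempty compact convex sets that is Lipschitz
with respect to `D_p`. -/
theorem no_lipschitz_extension (p : ℝ) (hp : 1 ≤ p) (d : ℕ) (hd0 : 0 < d)
    (hd : (2 * p + 2 : ℝ) < d)
    (s : Set (EuclideanSpace ℝ (Fin d)) → EuclideanSpace ℝ (Fin d))
    (hsel : ∀ K : Set (EuclideanSpace ℝ (Fin d)),
      K.Nonempty → IsCompact K → Convex ℝ K → s K ∈ K)
    (hB : s (Metric.closedBall 0 1) = EuclideanSpace.single (⟨0, hd0⟩ : Fin d) (1 : ℝ)) :
    ¬ ∃ L : ℝ, ∀ K K' : Set (EuclideanSpace ℝ (Fin d)),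
        K.Nonempty → IsCompact K → Convex ℝ K →
        K'.Nonempty → IsCompact K' → Convex ℝ K' →
        ‖s K - s K'‖ ≤ L * Dp p K K' := by
  rintro ⟨L, hL⟩
  have hp0 : 0 < p := lt_of_lt_of_le one_pos hp
  have hd1 : 1 < d := by
    have h4 : (4 : ℝ) < d := by linarith
    exact_mod_cast lt_trans (by norm_num : (1:ℝ) < 4) h4
  set e1 : EuclideanSpace ℝ (Fin d) := EuclideanSpace.single (⟨0, hd0⟩ : Fin d) (1 : ℝ)
    with he1def
  have he1 : ‖e1‖ = 1 := by rw [he1def, EuclideanSpace.norm_single]; norm_num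
  set B := Metric.closedBall (0 : EuclideanSpace ℝ (Fin d)) 1 with hBdef
  have hBne : B.Nonempty := ⟨0, by simp [hBdef]⟩
  have hBcp : IsCompact B := isCompact_closedBall 0 1
  have hBcv : Convex ℝ B := convex_closedBall 0 1
  have hπ := Real.pi_gt_three
  -- the family of truncated balls and caps
  set θ : ℕ → ℝ := fun n => 1 / ((n : ℝ) + 1) with hθdef
  have hθpos : ∀ n, 0 < θ n := fun n => by positivity
  have hθle1 : ∀ n, θ n ≤ 1 := fun n => by
    rw [hθdef]
    rw [div_le_one (by positivity)]
    simp
  set Kc : ℕ → Set (EuclideanSpace ℝ (Fin d)) :=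
    fun n => B ∩ {x | ⟪x, e1⟫ ≤ Real.cos (θ n)} with hKcdef
  set T : ℕ → Set (Metric.sphere (0 : EuclideanSpace ℝ (Fin d)) 1) :=
    fun n => {x | Real.cos (θ n) < ⟪(x : EuclideanSpace ℝ (Fin d)), e1⟫} with hTdef
  have hcos0 : ∀ n, 0 ≤ Real.cos (θ n) := fun n =>
    Real.cos_nonneg_of_mem_Icc ⟨by linarith [hθpos n], by linarith [hθle1 n]⟩
  have hcos1 : ∀ n, Real.cos (θ n) < 1 := fun n => by
    have := Real.cos_lt_cos_of_nonneg_of_le_pi (le_refl 0)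
      (by linarith [hθle1 n] : θ n ≤ π) (hθpos n)
    rwa [Real.cos_zero] at this
  have hTmeas : ∀ n, MeasurableSet (T n) := fun n => by
    apply measurableSet_lt measurable_const
    exact (Continuous.inner continuous_subtype_val continuous_const).measurable
  have hKne : ∀ n, (Kc n).Nonempty := fun n =>
    ⟨0, by simp [hKcdef, hBdef], by simp [hKcdef]; exact hcos0 n⟩
  have hinnerC : Continuous fun x : EuclideanSpace ℝ (Fin d) => ⟪x, e1⟫ :=
    Continuous.inner continuous_id continuous_const
  have hKcp : ∀ n, IsCompact (Kc n) := fun n =>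
    hBcp.inter_right (isClosed_le hinnerC continuous_const)
  have hKcv : ∀ n, Convex ℝ (Kc n) := fun n =>
    hBcv.inter (convex_halfSpace_le
      ⟨fun a b => inner_add_left a b e1, fun c x => real_inner_smul_left x e1 c⟩ _)
  have hKsub : ∀ n, Kc n ⊆ B := fun n => Set.inter_subset_left
  -- key estimate
  have key : ∀ n, (1 : ℝ) ≤ L * ((sphereMeasure d (T n)).toReal) ^ (1 / p) := by
    intro n
    have hsK : s (Kc n) ∈ Kc n := hsel _ (hKne n) (hKcp n) (hKcv n)
    -- lower bound
    have hlow : 1 - Real.cos (θ n) ≤ ‖s (Kc n) - s B‖ := by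
      have h1 : ⟪s (Kc n), e1⟫ ≤ Real.cos (θ n) := hsK.2
      calc 1 - Real.cos (θ n) ≤ 1 - ⟪s (Kc n), e1⟫ := by linarith
        _ = ⟪e1 - s (Kc n), e1⟫ := by
            rw [inner_sub_left, real_inner_self_eq_norm_mul_norm, he1]; ring
        _ ≤ ‖e1 - s (Kc n)‖ * ‖e1‖ := real_inner_le_norm _ _
        _ = ‖s (Kc n) - s B‖ := by rw [he1, mul_one, hB]; exact norm_sub_rev _ _
    -- pointwise bound on support function differences
    have hfg : ∀ y : Metric.sphere (0 : EuclideanSpace ℝ (Fin d)) 1,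
        |suppFn (Kc n) (y : EuclideanSpace ℝ (Fin d)) -
            suppFn B (y : EuclideanSpace ℝ (Fin d))| ^ p
          ≤ (T n).indicator (fun _ => (1 - Real.cos (θ n)) ^ p) y := by
      intro y
      have hy : ‖(y : EuclideanSpace ℝ (Fin d))‖ = 1 := mem_sphere_zero_iff_norm.mp y.2
      have hyB : (y : EuclideanSpace ℝ (Fin d)) ∈ B := by
        rw [hBdef, mem_closedBall_zero_iff, hy]
      have hBsupp : suppFn B (y : EuclideanSpace ℝ (Fin d)) = 1 :=
        suppFn_eq_one hy (by rw [hBdef]) hyB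
      by_cases hyT : y ∈ T n
      · rw [Set.indicator_of_mem hyT]
        have hub : suppFn (Kc n) (y : EuclideanSpace ℝ (Fin d)) ≤ 1 :=
          suppFn_le_one hy (hKsub n) (hKne n)
        have hye1 : ⟪(y : EuclideanSpace ℝ (Fin d)), e1⟫ ≤ 1 := by
          calc ⟪(y : EuclideanSpace ℝ (Fin d)), e1⟫ ≤ ‖(y : EuclideanSpace ℝ (Fin d))‖ * ‖e1‖ :=
            real_inner_le_norm _ _
          _ = 1 := by rw [hy, he1, mul_one]
        have hlb : Real.cos (θ n) ≤ suppFn (Kc n) (y : EuclideanSpace ℝ (Fin d)) := by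
          have hmem : Real.cos (θ n) • (y : EuclideanSpace ℝ (Fin d)) ∈ Kc n := by
            constructor
            · rw [hBdef, mem_closedBall_zero_iff, norm_smul, hy, mul_one]
              rw [Real.norm_eq_abs, abs_of_nonneg (hcos0 n)]
              exact (Real.cos_le_one _)
            · show ⟪Real.cos (θ n) • (y : EuclideanSpace ℝ (Fin d)), e1⟫ ≤ Real.cos (θ n)
              rw [real_inner_smul_left]
              calc Real.cos (θ n) * ⟪(y : EuclideanSpace ℝ (Fin d)), e1⟫
                  ≤ Real.cos (θ n) * 1 := by
                    exact mul_le_mul_of_nonneg_left hye1 (hcos0 n)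
                _ = Real.cos (θ n) := mul_one _
          have := le_suppFn hy (hKsub n) hmem
          rwa [real_inner_smul_left, real_inner_self_eq_norm_mul_norm, hy, one_mul, mul_one]
            at this
        rw [hBsupp]
        have habs : |suppFn (Kc n) (y : EuclideanSpace ℝ (Fin d)) - 1|
            = 1 - suppFn (Kc n) (y : EuclideanSpace ℝ (Fin d)) := by
          rw [abs_sub_comm, abs_of_nonneg (by linarith)]
        rw [habs]
        exact Real.rpow_le_rpow (by linarith) (by linarith) (le_of_lt hp0)
      · rw [Set.indicator_of_notMem hyT]
        have hyK : (y : EuclideanSpace ℝ (Fin d)) ∈ Kc n := by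
          refine ⟨hyB, ?_⟩
          show ⟪(y : EuclideanSpace ℝ (Fin d)), e1⟫ ≤ Real.cos (θ n)
          exact not_lt.mp hyT
        have hKsupp : suppFn (Kc n) (y : EuclideanSpace ℝ (Fin d)) = 1 :=
          suppFn_eq_one hy (fun x hx => (hKsub n) hx) hyK
        rw [hKsupp, hBsupp, sub_self, abs_zero, Real.zero_rpow (ne_of_gt hp0)]
    -- integral bound
    have hint : ∫ y : Metric.sphere (0 : EuclideanSpace ℝ (Fin d)) 1,
        |suppFn (Kc n) (y : EuclideanSpace ℝ (Fin d)) -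
            suppFn B (y : EuclideanSpace ℝ (Fin d))| ^ p ∂ sphereMeasure d
        ≤ (sphereMeasure d (T n)).toReal * (1 - Real.cos (θ n)) ^ p := by
      calc ∫ y : Metric.sphere (0 : EuclideanSpace ℝ (Fin d)) 1,
            |suppFn (Kc n) (y : EuclideanSpace ℝ (Fin d)) -
                suppFn B (y : EuclideanSpace ℝ (Fin d))| ^ p ∂ sphereMeasure d
          ≤ ∫ y : Metric.sphere (0 : EuclideanSpace ℝ (Fin d)) 1,
            (T n).indicator (fun _ => (1 - Real.cos (θ n)) ^ p) y ∂ sphereMeasure d := by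
            apply integral_mono_of_nonneg
            · exact ae_of_all _ fun y => Real.rpow_nonneg (abs_nonneg _) p
            · exact (integrable_const _).indicator (hTmeas n)
            · exact ae_of_all _ hfg
        _ = (sphereMeasure d (T n)).toReal * (1 - Real.cos (θ n)) ^ p := by
            rw [integral_indicator_const _ (hTmeas n), smul_eq_mul]; rfl
    have hintnn : 0 ≤ ∫ y : Metric.sphere (0 : EuclideanSpace ℝ (Fin d)) 1,
        |suppFn (Kc n) (y : EuclideanSpace ℝ (Fin d)) -
            suppFn B (y : EuclideanSpace ℝ (Fin d))| ^ p ∂ sphereMeasure d :=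
      integral_nonneg fun y => Real.rpow_nonneg (abs_nonneg _) p
    have hDp : Dp p (Kc n) B
        ≤ (1 - Real.cos (θ n)) * ((sphereMeasure d (T n)).toReal) ^ (1 / p) := by
      rw [Dp]
      calc (∫ y : Metric.sphere (0 : EuclideanSpace ℝ (Fin d)) 1,
            |suppFn (Kc n) (y : EuclideanSpace ℝ (Fin d)) -
                suppFn B (y : EuclideanSpace ℝ (Fin d))| ^ p ∂ sphereMeasure d) ^ (1 / p)
          ≤ ((sphereMeasure d (T n)).toReal * (1 - Real.cos (θ n)) ^ p) ^ (1 / p) :=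
            Real.rpow_le_rpow hintnn hint (by positivity)
        _ = ((sphereMeasure d (T n)).toReal) ^ (1 / p) * ((1 - Real.cos (θ n)) ^ p) ^ (1 / p) :=
            Real.mul_rpow ENNReal.toReal_nonneg (Real.rpow_nonneg (by linarith [hcos1 n]) p)
        _ = (1 - Real.cos (θ n)) * ((sphereMeasure d (T n)).toReal) ^ (1 / p) := by
            rw [← Real.rpow_mul (by linarith [hcos1 n]), mul_one_div, div_self (ne_of_gt hp0),
              Real.rpow_one, mul_comm]
    have hDpnn : 0 ≤ Dp p (Kc n) B := Real.rpow_nonneg hintnn _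
    have hlip := hL (Kc n) B (hKne n) (hKcp n) (hKcv n) hBne hBcp hBcv
    have hchain : 1 - Real.cos (θ n) ≤ L * Dp p (Kc n) B := le_trans hlow hlip
    have hLpos : 0 < L := by
      by_contra h
      push_neg at h
      have h1 : L * Dp p (Kc n) B ≤ 0 := mul_nonpos_of_nonpos_of_nonneg h hDpnn
      linarith [hcos1 n]
    have hfin : 1 - Real.cos (θ n)
        ≤ L * ((1 - Real.cos (θ n)) * ((sphereMeasure d (T n)).toReal) ^ (1 / p)) :=
      le_trans hchain (mul_le_mul_of_nonneg_left hDp hLpos.le)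
    have hpos : 0 < 1 - Real.cos (θ n) := by linarith [hcos1 n]
    nlinarith [hfin, hpos]
  -- the cap measures tend to zero
  have hanti : Antitone T := by
    intro m k hmk x hx
    have h1 : θ k ≤ θ m := by
      rw [hθdef]
      apply one_div_le_one_div_of_le (by positivity)
      have : (m : ℝ) ≤ k := Nat.cast_le.mpr hmk
      linarith
    have h2 : Real.cos (θ m) ≤ Real.cos (θ k) :=
      Real.cos_le_cos_of_nonneg_of_le_pi (le_of_lt (hθpos k)) (by linarith [hθle1 m]) h1
    exact lt_of_le_of_lt h2 hx
  have he1mem : e1 ∈ Metric.sphere (0 : EuclideanSpace ℝ (Fin d)) 1 := by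
    rw [mem_sphere_zero_iff_norm]; exact he1
  have hiInter : sphereMeasure d (⋂ n, T n) = 0 := by
    apply measure_mono_null (t := {(⟨e1, he1mem⟩ : Metric.sphere (0 : EuclideanSpace ℝ (Fin d)) 1)})
    · intro x hx
      rw [Set.mem_iInter] at hx
      have hxn : ‖(x : EuclideanSpace ℝ (Fin d))‖ = 1 := mem_sphere_zero_iff_norm.mp x.2
      have hlim : Filter.Tendsto (fun n : ℕ => Real.cos (θ n)) Filter.atTop (nhds 1) := by
        have h0 : Filter.Tendsto θ Filter.atTop (nhds 0) := by
          rw [hθdef]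
          exact tendsto_one_div_add_atTop_nhds_zero_nat
        have := (Real.continuous_cos.tendsto 0).comp h0
        rwa [Real.cos_zero] at this
      have h1 : (1 : ℝ) ≤ ⟪(x : EuclideanSpace ℝ (Fin d)), e1⟫ :=
        le_of_tendsto hlim (Filter.Eventually.of_forall fun n => (hx n).le)
      have h2 : ⟪(x : EuclideanSpace ℝ (Fin d)), e1⟫ ≤ 1 := by
        calc ⟪(x : EuclideanSpace ℝ (Fin d)), e1⟫
            ≤ ‖(x : EuclideanSpace ℝ (Fin d))‖ * ‖e1‖ := real_inner_le_norm _ _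
          _ = 1 := by rw [hxn, he1, mul_one]
      have heq : ⟪(x : EuclideanSpace ℝ (Fin d)), e1⟫ = 1 := le_antisymm h2 h1
      have hxe : (x : EuclideanSpace ℝ (Fin d)) = e1 :=
        (inner_eq_one_iff_of_norm_eq_one (𝕜 := ℝ) hxn he1).mp heq
      exact Set.mem_singleton_iff.mpr (Subtype.ext hxe)
    · exact sphereMeasure_singleton d hd1 _
  have hT0 : Filter.Tendsto (fun n => sphereMeasure d (T n)) Filter.atTop (nhds 0) := by
    have := tendsto_measure_iInter_atTop (μ := sphereMeasure d)
      (fun n => (hTmeas n).nullMeasurableSet) hanti ⟨0, measure_ne_top _ _⟩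
    rwa [hiInter] at this
  have hTr : Filter.Tendsto (fun n => (sphereMeasure d (T n)).toReal) Filter.atTop (nhds 0) := by
    have h := (ENNReal.tendsto_toReal (by simp : (0 : ℝ≥0∞) ≠ ⊤)).comp hT0
    exact h
  have hrp : Filter.Tendsto (fun n => L * ((sphereMeasure d (T n)).toReal) ^ (1 / p))
      Filter.atTop (nhds 0) := by
    have h1 : Filter.Tendsto (fun x : ℝ => x ^ (1 / p)) (nhds 0) (nhds (0 : ℝ)) := by
      have hc := (Real.continuousAt_rpow_const 0 (1 / p) (Or.inr (by positivity))).tendsto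
      rwa [Real.zero_rpow (by positivity : (1 / p) ≠ 0)] at hc
    have h2 := (h1.comp hTr).const_mul L
    simpa using h2
  obtain ⟨n, hn⟩ := (hrp.eventually_lt_const (by norm_num : (0 : ℝ) < 1)).exists
  linarith [key n]
end
end
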